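/- In R = MvPolynomial (Fin 3) ℂ with variables x, y, z, let f₁ = z·(x³ − y³), f₂ = x·(y³ − z³), f₃ = y·(x³ − z³). Then the polynomial f = x⁶y³ − x³y⁶ − x⁶z³ + y⁶z³ + x³z⁶ − y³z⁶ does NOT belong to the square of the ideal Ideal.span {f₁, f₂, f₃}. -/
import Mathlib


open MvPolynomial Pointwise

namespace FNotInSpanSq

noncomputable section

/-- The exponent finsupp for the monomial `x^a y^b z^c`. -/
def s (a b c : ℕ) : Fin 3 →₀ ℕ :=
  Finsupp.single 0 a + Finsupp.single 1 b + Finsupp.single 2 c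

lemma s_apply0 (a b c : ℕ) : s a b c 0 = a := by
  simp [s, Finsupp.single_apply]
lemma s_apply1 (a b c : ℕ) : s a b c 1 = b := by
  simp [s, Finsupp.single_apply]
lemma s_apply2 (a b c : ℕ) : s a b c 2 = c := by
  simp [s, Finsupp.single_apply]

lemma s_le {a b c d e f : ℕ} : s a b c ≤ s d e f ↔ a ≤ d ∧ b ≤ e ∧ c ≤ f := by
  constructor
  · intro h
    exact ⟨by simpa [s_apply0] using h 0, by simpa [s_apply1] using h 1,
      by simpa [s_apply2] using h 2⟩
  · rintro ⟨h1, h2, h3⟩ i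
    fin_cases i <;> simpa [s_apply0, s_apply1, s_apply2]

lemma s_sub (a b c d e f : ℕ) : s a b c - s d e f = s (a - d) (b - e) (c - f) := by
  ext i
  fin_cases i <;>
    simp [Finsupp.tsub_apply, s_apply0, s_apply1, s_apply2]

lemma s_eq {a b c d e f : ℕ} : s a b c = s d e f ↔ a = d ∧ b = e ∧ c = f := by
  constructor
  · intro h
    refine ⟨?_, ?_, ?_⟩
    · have := congrArg (fun g => g 0) h; simpa [s_apply0] using this
    · have := congrArg (fun g => g 1) h; simpa [s_apply1] using this
    · have := congrArg (fun g => g 2) h; simpa [s_apply2] using this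
  · rintro ⟨rfl, rfl, rfl⟩; rfl

lemma monomial_s (a b c : ℕ) (r : ℂ) :
    (monomial (s a b c) r : MvPolynomial (Fin 3) ℂ) = C r * X 0 ^ a * X 1 ^ b * X 2 ^ c := by
  rw [s, add_assoc, monomial_single_add, monomial_single_add, C_mul_X_pow_eq_monomial.symm]
  ring

abbrev R3 := MvPolynomial (Fin 3) ℂ

/-- The linear functional: coefficient of `x^3 z^6` minus coefficient of `x^3 y^6`. -/
def L : R3 →ₗ[ℂ] ℂ := lcoeff ℂ (s 3 0 6) - lcoeff ℂ (s 3 6 0)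

lemma L_apply (p : R3) : L p = coeff (s 3 0 6) p - coeff (s 3 6 0) p := by
  simp [L, LinearMap.sub_apply, lcoeff_apply]

def f₁ : R3 := X 2 * (X 0 ^ 3 - X 1 ^ 3)
def f₂ : R3 := X 0 * (X 1 ^ 3 - X 2 ^ 3)
def f₃ : R3 := X 1 * (X 0 ^ 3 - X 2 ^ 3)

lemma exp11 : f₁ * f₁ =
    monomial (s 0 6 2) 1 + monomial (s 3 3 2) (-2) + monomial (s 6 0 2) 1 := by
  simp only [f₁, monomial_s, map_one, map_neg, map_ofNat]; ring

lemma exp12 : f₁ * f₂ =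
    monomial (s 1 3 4) 1 + monomial (s 1 6 1) (-1) + monomial (s 4 0 4) (-1)
      + monomial (s 4 3 1) 1 := by
  simp only [f₁, f₂, monomial_s, map_one, map_neg]; ring

lemma exp13 : f₁ * f₃ =
    monomial (s 0 4 4) 1 + monomial (s 3 1 4) (-1) + monomial (s 3 4 1) (-1)
      + monomial (s 6 1 1) 1 := by
  simp only [f₁, f₃, monomial_s, map_one, map_neg]; ring

lemma exp22 : f₂ * f₂ =
    monomial (s 2 0 6) 1 + monomial (s 2 3 3) (-2) + monomial (s 2 6 0) 1 := by
  simp only [f₂, monomial_s, map_one, map_neg, map_ofNat]; ring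

lemma exp23 : f₂ * f₃ =
    monomial (s 1 1 6) 1 + monomial (s 1 4 3) (-1) + monomial (s 4 1 3) (-1)
      + monomial (s 4 4 0) 1 := by
  simp only [f₂, f₃, monomial_s, map_one, map_neg]; ring

lemma exp33 : f₃ * f₃ =
    monomial (s 0 2 6) 1 + monomial (s 3 2 3) (-2) + monomial (s 6 2 0) 1 := by
  simp only [f₃, monomial_s, map_one, map_neg, map_ofNat]; ring

lemma L_mul_prod (x y : R3) (hx : x ∈ ({f₁, f₂, f₃} : Set R3))
    (hy : y ∈ ({f₁, f₂, f₃} : Set R3)) (r : R3) : L (r * (x * y)) = 0 := by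
  have key : ∀ g : R3, (g = f₁ * f₁ ∨ g = f₁ * f₂ ∨ g = f₁ * f₃ ∨ g = f₂ * f₂ ∨
      g = f₂ * f₃ ∨ g = f₃ * f₃) → L (r * g) = 0 := by
    rintro g (rfl | rfl | rfl | rfl | rfl | rfl) <;>
      rw [L_apply] <;>
      simp only [exp11, exp12, exp13, exp22, exp23, exp33, mul_add, coeff_add,
        coeff_mul_monomial', s_le, s_sub] <;>
      norm_num
  rcases hx with rfl | rfl | rfl <;> rcases hy with rfl | rfl | rfl
  · exact key _ (Or.inl rfl)
  · exact key _ (Or.inr (Or.inl rfl))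
  · exact key _ (Or.inr (Or.inr (Or.inl rfl)))
  · rw [mul_comm f₂ f₁]; exact key _ (Or.inr (Or.inl rfl))
  · exact key _ (Or.inr (Or.inr (Or.inr (Or.inl rfl))))
  · exact key _ (Or.inr (Or.inr (Or.inr (Or.inr (Or.inl rfl)))))
  · rw [mul_comm f₃ f₁]; exact key _ (Or.inr (Or.inr (Or.inl rfl)))
  · rw [mul_comm f₃ f₂]; exact key _ (Or.inr (Or.inr (Or.inr (Or.inr (Or.inl rfl)))))
  · exact key _ (Or.inr (Or.inr (Or.inr (Or.inr (Or.inr rfl)))))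

lemma fexp : (X 0 ^ 6 * X 1 ^ 3 - X 0 ^ 3 * X 1 ^ 6 - X 0 ^ 6 * X 2 ^ 3
        + X 1 ^ 6 * X 2 ^ 3 + X 0 ^ 3 * X 2 ^ 6 - X 1 ^ 3 * X 2 ^ 6 : R3) =
    monomial (s 6 3 0) 1 + monomial (s 3 6 0) (-1) + monomial (s 6 0 3) (-1)
      + monomial (s 0 6 3) 1 + monomial (s 3 0 6) 1 + monomial (s 0 3 6) (-1) := by
  simp only [monomial_s, map_one, map_neg]; ring

lemma L_f : L (X 0 ^ 6 * X 1 ^ 3 - X 0 ^ 3 * X 1 ^ 6 - X 0 ^ 6 * X 2 ^ 3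
        + X 1 ^ 6 * X 2 ^ 3 + X 0 ^ 3 * X 2 ^ 6 - X 1 ^ 3 * X 2 ^ 6 : R3) = 2 := by
  rw [L_apply, fexp]
  simp only [coeff_add, coeff_monomial, s_eq]
  norm_num

end

end FNotInSpanSq

open FNotInSpanSq in
theorem f_not_in_span_squared :
    (X 0 ^ 6 * X 1 ^ 3 - X 0 ^ 3 * X 1 ^ 6 - X 0 ^ 6 * X 2 ^ 3
        + X 1 ^ 6 * X 2 ^ 3 + X 0 ^ 3 * X 2 ^ 6 - X 1 ^ 3 * X 2 ^ 6 :
      MvPolynomial (Fin 3) ℂ) ∉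
    (Ideal.span {X 2 * (X 0 ^ 3 - X 1 ^ 3),
                 X 0 * (X 1 ^ 3 - X 2 ^ 3),
                 X 1 * (X 0 ^ 3 - X 2 ^ 3)} : Ideal (MvPolynomial (Fin 3) ℂ)) ^ 2 := by
  intro h
  rw [sq, Ideal.span_mul_span'] at h
  rw [show ({X 2 * (X 0 ^ 3 - X 1 ^ 3), X 0 * (X 1 ^ 3 - X 2 ^ 3),
      X 1 * (X 0 ^ 3 - X 2 ^ 3)} : Set R3) = {f₁, f₂, f₃} from rfl] at h
  have h' := Submodule.mem_span_set.mp h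
  obtain ⟨c, hsupp, hsum⟩ := h'
  have hL : L (c.sum fun mi r => r • mi) = 0 := by
    rw [map_finsuppSum]
    rw [Finsupp.sum]
    apply Finset.sum_eq_zero
    intro i hi
    have hiS : i ∈ ({f₁, f₂, f₃} : Set R3) * ({f₁, f₂, f₃} : Set R3) := hsupp hi
    obtain ⟨x, hx, y, hy, rfl⟩ := hiS
    rw [smul_eq_mul]
    exact L_mul_prod x y hx hy (c (x * y))
  rw [hsum, L_f] at hL
  norm_num at hL
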